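/- Let X be a stationary random vector on Λ = (ℤ/Nℤ)^r with discrete Fourier transform X̂. For integers k, k', Cov([X̂(ω)]^k, [X̂(ω')]^{k'}) = 0 whenever kω ≠ k'ω' (modulo 2π in each coordinate), where [z]^k = |z| e^{ikφ(z)} is the phase harmonic. -/

import Mathlib

open MeasureTheory

/-- Discrete Fourier transform on `Λ = (ℤ/Nℤ)^r`, at frequency `ω = 2πm/N`. -/
noncomputable def dft {N r : ℕ} [NeZero N] (x : (Fin r → ZMod N) → ℂ)
    (m : Fin r → ZMod N) : ℂ :=
  ∑ u : Fin r → ZMod N, x u *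
    Complex.exp (-(2 * (Real.pi : ℂ) * Complex.I *
      (∑ i, ((m i).val : ℂ) * ((u i).val : ℂ)) / (N : ℂ)))

/-- Covariance `Cov(A,B) = E[A B*] − E[A] E[B]*` of complex random variables. -/
noncomputable def ccov {Ω : Type*} [MeasurableSpace Ω] (μ : Measure Ω)
    (A B : Ω → ℂ) : ℂ :=
  (∫ ω, A ω * (starRingEnd ℂ) (B ω) ∂μ) -
    (∫ ω, A ω ∂μ) * (starRingEnd ℂ) (∫ ω, B ω ∂μ)

/-- The phase harmonic `[z]^k = |z| e^{i k φ(z)}`, with `[0]^k = 0`. -/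
noncomputable def phaseHarmonic (k : ℤ) (z : ℂ) : ℂ :=
  ((‖z‖ : ℝ) : ℂ) * Complex.exp ((k : ℂ) * (Complex.arg z : ℂ) * Complex.I)

/-! Translating `X` by `τ` multiplies `X̂(ω)` by the unimodular character `e^{-iω·τ}`, and
`[·]^k` turns a unimodular factor `c` into `c^k`; so `[X̂(ω)]^k [X̂(ω')]^{k'}*` picks up the factor
`e^{-i(kω - k'ω')·τ}`. Stationarity makes every such expectation invariant under translation,
hence zero as soon as the factor differs from `1` for some `τ`, i.e. when `kω ≠ k'ω'`. For the
same reason at least one of the means `E[X̂(ω)]^k`, `E[X̂(ω')]^{k'}` vanishes. -/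

open Complex ComplexConjugate

theorem integral_eq_zero_of_map_comp_eq {Ω α : Type*} [MeasurableSpace Ω] [MeasurableSpace α]
    {μ : Measure Ω} {X : Ω → α} (hX : Measurable X) {T : α → α} (hT : Measurable T)
    (hTX : μ.map (T ∘ X) = μ.map X) {G : α → ℂ} (hG : Measurable G) {c : ℂ} (hc : c ≠ 1)
    (hGT : ∀ x, G (T x) = c * G x) : ∫ ω, G (X ω) ∂μ = 0 := by
  have hfix : ∫ ω, G (X ω) ∂μ = c * ∫ ω, G (X ω) ∂μ := calc
    ∫ ω, G (X ω) ∂μ = ∫ x, G x ∂(μ.map X) :=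
      (integral_map hX.aemeasurable hG.aestronglyMeasurable).symm
    _ = ∫ x, G x ∂(μ.map (T ∘ X)) := by rw [hTX]
    _ = ∫ ω, G (T (X ω)) ∂μ := integral_map (hT.comp hX).aemeasurable hG.aestronglyMeasurable
    _ = c * ∫ ω, G (X ω) ∂μ := by simp_rw [hGT]; exact integral_const_mul c _
  have h : (1 - c) * ∫ ω, G (X ω) ∂μ = 0 := by linear_combination hfix
  exact (mul_eq_zero.mp h).resolve_left (sub_ne_zero.mpr hc.symm)

theorem ZMod.exists_toCircle_neg_dotProduct_ne_one {N : ℕ} [NeZero N] {ι : Type*} [Fintype ι]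
    [DecidableEq ι] {v : ι → ZMod N} (hv : v ≠ 0) : ∃ τ, toCircle (-(v ⬝ᵥ τ)) ≠ 1 := by
  obtain ⟨j, hj⟩ := Function.ne_iff.mp hv
  refine ⟨Pi.single j 1, fun h => hj ?_⟩
  rwa [dotProduct_single, mul_one, ← (toCircle (N := N)).map_zero_eq_one,
    injective_toCircle.eq_iff, neg_eq_zero] at h

theorem phaseHarmonic_eq_norm_mul_zpow (k : ℤ) (z : ℂ) :
    phaseHarmonic k z = ‖z‖ * exp (arg z * I) ^ k := by
  rw [phaseHarmonic, mul_assoc, ← exp_int_mul]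

theorem phaseHarmonic_circle_mul (k : ℤ) (c : Circle) (z : ℂ) :
    phaseHarmonic k (c * z) = ↑(c ^ k) * phaseHarmonic k z := by
  rcases eq_or_ne z 0 with rfl | hz
  · simp [phaseHarmonic]
  have hnorm : ‖(c : ℂ) * z‖ = ‖z‖ := by rw [norm_mul, Circle.norm_coe, one_mul]
  have hdir : exp (arg (c * z) * I) = c * exp (arg z * I) := by
    refine mul_left_cancel₀ (ofReal_ne_zero.mpr (norm_ne_zero_iff.mpr hz)) ?_
    rw [← hnorm, norm_mul_exp_arg_mul_I, hnorm, mul_left_comm, norm_mul_exp_arg_mul_I]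
  rw [phaseHarmonic_eq_norm_mul_zpow, phaseHarmonic_eq_norm_mul_zpow, hnorm, hdir, mul_zpow,
    Circle.coe_zpow]
  ring

theorem measurable_phaseHarmonic (k : ℤ) : Measurable (phaseHarmonic k) := by
  unfold phaseHarmonic
  fun_prop

section Fourier

variable {N r : ℕ} [NeZero N]

theorem dft_eq_sum_toCircle (x : (Fin r → ZMod N) → ℂ) (m : Fin r → ZMod N) :
    dft x m = ∑ u, x u * ZMod.toCircle (-(m ⬝ᵥ u)) := by
  refine Finset.sum_congr rfl fun u _ => congrArg (x u * ·) ?_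
  have hdot : m ⬝ᵥ u = ((∑ i, (m i).val * (u i).val : ℕ) : ZMod N) := by simp [dotProduct]
  rw [AddChar.map_neg_eq_inv, Circle.coe_inv, hdot, ZMod.toCircle_natCast, ← exp_neg]
  push_cast
  ring_nf

theorem dft_shift (x : (Fin r → ZMod N) → ℂ) (m τ : Fin r → ZMod N) :
    dft (fun u => x (u - τ)) m = ZMod.toCircle (-(m ⬝ᵥ τ)) * dft x m := by
  simp_rw [dft_eq_sum_toCircle, Finset.mul_sum]
  refine Fintype.sum_equiv (Equiv.subRight τ) _ _ fun u => ?_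
  have hsplit : -(m ⬝ᵥ u) = -(m ⬝ᵥ τ) + -(m ⬝ᵥ (u - τ)) := by rw [dotProduct_sub]; ring
  rw [Equiv.subRight_apply, hsplit, AddChar.map_add_eq_mul, Circle.coe_mul]
  ring

theorem phaseHarmonic_dft_shift (k : ℤ) (x : (Fin r → ZMod N) → ℂ) (m τ : Fin r → ZMod N) :
    phaseHarmonic k (dft (fun u => x (u - τ)) m)
      = ZMod.toCircle (-((k : ZMod N) • m ⬝ᵥ τ)) * phaseHarmonic k (dft x m) := by
  rw [dft_shift, phaseHarmonic_circle_mul, ← AddChar.map_zsmul_eq_zpow, smul_dotProduct,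
    smul_neg, smul_eq_mul, zsmul_eq_mul]

theorem measurable_dft_ofReal (m : Fin r → ZMod N) :
    Measurable fun x : (Fin r → ZMod N) → ℝ => dft (fun u => (x u : ℂ)) m := by
  unfold dft
  fun_prop

end Fourier

section Stationary

variable {Ω : Type*} [MeasurableSpace Ω] {μ : Measure Ω}

theorem integral_eq_zero_of_stationary {N : ℕ} [NeZero N] {ι : Type*} [Fintype ι]
    [DecidableEq ι] {X : Ω → (ι → ZMod N) → ℝ} (hX : Measurable X)
    (hstat : ∀ τ, μ.map (fun ω u => X ω (u - τ)) = μ.map X) {G : ((ι → ZMod N) → ℝ) → ℂ}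
    (hG : Measurable G) {v : ι → ZMod N} (hv : v ≠ 0)
    (hGshift : ∀ τ x, G (fun u => x (u - τ)) = ZMod.toCircle (-(v ⬝ᵥ τ)) * G x) :
    ∫ ω, G (X ω) ∂μ = 0 := by
  obtain ⟨τ, hτ⟩ := ZMod.exists_toCircle_neg_dotProduct_ne_one hv
  exact integral_eq_zero_of_map_comp_eq hX (measurable_pi_lambda _ fun u => measurable_pi_apply _)
    (hstat τ) hG (Circle.coe_eq_one.not.mpr hτ) (hGshift τ)

variable {N r : ℕ} [NeZero N] {X : Ω → (Fin r → ZMod N) → ℝ}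

theorem integral_phaseHarmonic_dft_eq_zero (hX : Measurable X)
    (hstat : ∀ τ, μ.map (fun ω u => X ω (u - τ)) = μ.map X) {l : ℤ} {n : Fin r → ZMod N}
    (h : (l : ZMod N) • n ≠ 0) :
    ∫ ω, phaseHarmonic l (dft (fun u => (X ω u : ℂ)) n) ∂μ = 0 :=
  integral_eq_zero_of_stationary (G := fun x => phaseHarmonic l (dft (fun u => (x u : ℂ)) n))
    hX hstat ((measurable_phaseHarmonic l).comp (measurable_dft_ofReal n)) h
    fun τ x => phaseHarmonic_dft_shift l (fun u => (x u : ℂ)) n τ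

theorem integral_phaseHarmonic_dft_mul_conj_eq_zero (hX : Measurable X)
    (hstat : ∀ τ, μ.map (fun ω u => X ω (u - τ)) = μ.map X) {k k' : ℤ}
    {m m' : Fin r → ZMod N} (h : (k : ZMod N) • m ≠ (k' : ZMod N) • m') :
    ∫ ω, phaseHarmonic k (dft (fun u => (X ω u : ℂ)) m) *
      conj (phaseHarmonic k' (dft (fun u => (X ω u : ℂ)) m')) ∂μ = 0 := by
  refine integral_eq_zero_of_stationary
    (G := fun x => phaseHarmonic k (dft (fun u => (x u : ℂ)) m) *
      conj (phaseHarmonic k' (dft (fun u => (x u : ℂ)) m')))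
    hX hstat ?_ (sub_ne_zero.mpr h) fun τ x => ?_
  · exact ((measurable_phaseHarmonic k).comp (measurable_dft_ofReal m)).mul
      (continuous_conj.measurable.comp
        ((measurable_phaseHarmonic k').comp (measurable_dft_ofReal m')))
  · rw [phaseHarmonic_dft_shift k (fun u => (x u : ℂ)),
      phaseHarmonic_dft_shift k' (fun u => (x u : ℂ)), map_mul, ← Circle.coe_inv_eq_conj,
      ← AddChar.map_neg_eq_inv, neg_neg, sub_dotProduct, neg_sub, sub_eq_add_neg,
      AddChar.map_add_eq_mul, Circle.coe_mul]
    ring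

end Stationary

theorem stationary_dft_phaseHarmonic_uncorrelated_general {N r : ℕ} [NeZero N]
    {Ω : Type*} [MeasurableSpace Ω] (μ : Measure Ω)
    (X : Ω → (Fin r → ZMod N) → ℝ) (hmeas : Measurable X)
    (hstat : ∀ τ : Fin r → ZMod N,
      Measure.map (fun ω => fun u => X ω (u - τ)) μ = Measure.map X μ)
    (k k' : ℤ) (m m' : Fin r → ZMod N)
    (hfreq : (fun i => (k : ZMod N) * m i) ≠ fun i => (k' : ZMod N) * m' i) :
    ccov μ (fun ω => phaseHarmonic k (dft (fun u => ((X ω u : ℝ) : ℂ)) m))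
      (fun ω => phaseHarmonic k' (dft (fun u => ((X ω u : ℝ) : ℂ)) m')) = 0 := by
  have hfreq : (k : ZMod N) • m ≠ (k' : ZMod N) • m' := hfreq
  have hmean : ∫ ω, phaseHarmonic k (dft (fun u => (X ω u : ℂ)) m) ∂μ = 0 ∨
      ∫ ω, phaseHarmonic k' (dft (fun u => (X ω u : ℂ)) m') ∂μ = 0 := by
    by_cases hkm : (k : ZMod N) • m = 0
    · exact .inr (integral_phaseHarmonic_dft_eq_zero hmeas hstat (hkm ▸ hfreq).symm)
    · exact .inl (integral_phaseHarmonic_dft_eq_zero hmeas hstat hkm)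
  rw [ccov, integral_phaseHarmonic_dft_mul_conj_eq_zero hmeas hstat hfreq, zero_sub, neg_eq_zero]
  rcases hmean with h | h <;> simp [h]

theorem stationary_dft_phaseHarmonic_uncorrelated {N r : ℕ} [NeZero N]
    {Ω : Type*} [MeasurableSpace Ω] (μ : Measure Ω) [IsProbabilityMeasure μ]
    (X : Ω → (Fin r → ZMod N) → ℝ) (hmeas : Measurable X)
    (hL2 : ∀ u, MemLp (fun ω => X ω u) 2 μ)
    (hstat : ∀ τ : Fin r → ZMod N,
      Measure.map (fun ω => fun u => X ω (u - τ)) μ = Measure.map X μ)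
    (k k' : ℤ) (m m' : Fin r → ZMod N)
    (hfreq : (fun i => (k : ZMod N) * m i) ≠ fun i => (k' : ZMod N) * m' i) :
    ccov μ (fun ω => phaseHarmonic k (dft (fun u => ((X ω u : ℝ) : ℂ)) m))
      (fun ω => phaseHarmonic k' (dft (fun u => ((X ω u : ℝ) : ℂ)) m')) = 0 :=
  stationary_dft_phaseHarmonic_uncorrelated_general μ X hmeas hstat k k' m m' hfreq
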